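/- With Q = Σ_{i,j} (-1)^{[i][j]} θ_i θ_j E_{j̄ī} ⊗ E_{ji} (graded tensor product), one has Q² = θ₀ (m−n) Q. -/

import Mathlib

namespace RefClass2

open Matrix

/-- The sign `(-1)^x` for a parity `x : ZMod 2`. -/
noncomputable def sgn (x : ZMod 2) : ℂ := (-1 : ℂ) ^ x.val

/-- Graded (Koszul-signed) tensor product of two matrices with respect to a
parity function `p` on the indices. -/
noncomputable def gkron {N : ℕ} (p : Fin N → ZMod 2)
    (A B : Matrix (Fin N) (Fin N) ℂ) :
    Matrix (Fin N × Fin N) (Fin N × Fin N) ℂ :=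
  fun rs cd => sgn ((p rs.2 + p cd.2) * p cd.1) * A rs.1 cd.1 * B rs.2 cd.2

/-- The (super)permutation operator `P = Σ_{i,j} (-1)^[j] E_{ij} ⊗ E_{ji}`. -/
noncomputable def Pop {N : ℕ} (p : Fin N → ZMod 2) :
    Matrix (Fin N × Fin N) (Fin N × Fin N) ℂ :=
  ∑ i : Fin N, ∑ j : Fin N,
    sgn (p j) • gkron p (single i j 1) (single j i 1)

/-- The sign `θ_i`: equal to `+1` for `1 ≤ i ≤ m + n/2` and `-1` for
`m + n/2 + 1 ≤ i ≤ m + n` (here in 0-based indexing). -/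
noncomputable def thv (m n : ℕ) (i : Fin (m + n)) : ℂ :=
  if (i : ℕ) < m + n / 2 then 1 else -1

/-- The conjugate index `ī`: `ī = m + 1 - i` for `1 ≤ i ≤ m` and
`ī = 2m + n + 1 - i` for `m + 1 ≤ i ≤ m + n` (here in 0-based indexing). -/
def bar (m n : ℕ) (i : Fin (m + n)) : Fin (m + n) :=
  ⟨if (i : ℕ) < m then m - 1 - (i : ℕ) else 2 * m + n - 1 - (i : ℕ), by
    have := i.isLt; split <;> omega⟩

/-- The operator `Q = Σ_{i,j} (-1)^{[i][j]} θ_i θ_j E_{j̄ī} ⊗ E_{ji}`. -/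
noncomputable def Qop (m n : ℕ) (p : Fin (m + n) → ZMod 2) :
    Matrix (Fin (m + n) × Fin (m + n)) (Fin (m + n) × Fin (m + n)) ℂ :=
  ∑ i : Fin (m + n), ∑ j : Fin (m + n),
    (sgn (p i * p j) * thv m n i * thv m n j) •
      gkron p (single (bar m n j) (bar m n i) 1) (single j i 1)

lemma sgn_zero : sgn 0 = 1 := by simp [sgn]

lemma sgn_one : sgn 1 = -1 := by
  show (-1 : ℂ) ^ (1 : ZMod 2).val = -1
  rw [ZMod.val_one]; ring

lemma zmod2_cases (x : ZMod 2) : x = 0 ∨ x = 1 := by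
  fin_cases x
  · exact Or.inl rfl
  · exact Or.inr rfl

lemma sgn_inj {x y : ZMod 2} (h : sgn x = sgn y) : x = y := by
  rcases zmod2_cases x with rfl|rfl <;> rcases zmod2_cases y with rfl|rfl <;>
    simp_all [sgn_zero, sgn_one] <;> norm_num at h

lemma thv_sq (m n : ℕ) (i : Fin (m + n)) : thv m n i * thv m n i = 1 := by
  unfold thv; split <;> ring

lemma bar_lt_iff (m n : ℕ) (i : Fin (m + n)) :
    ((bar m n i : Fin (m + n)) : ℕ) < m ↔ (i : ℕ) < m := by
  have := i.isLt
  simp only [bar]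
  split <;> omega

lemma sign_simp (x y : ZMod 2) : sgn (x * y) * sgn ((y + x) * x) = sgn x := by
  rcases zmod2_cases x with rfl|rfl <;> rcases zmod2_cases y with rfl|rfl <;>
    simp [sgn_zero, sgn_one] <;>
  · rw [show (1 : ZMod 2) + 1 = 0 by decide, sgn_zero]

lemma Qop_apply (m n : ℕ) (p : Fin (m + n) → ZMod 2)
    (hpb : ∀ i, p (bar m n i) = p i) (r s c d : Fin (m + n)) :
    Qop m n p (r, s) (c, d) =
      if r = bar m n s ∧ c = bar m n d then
        sgn (p d) * thv m n s * thv m n d else 0 := by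
  unfold Qop
  simp only [Matrix.sum_apply, Matrix.smul_apply, gkron, smul_eq_mul]
  rw [Finset.sum_eq_single d]
  · rw [Finset.sum_eq_single s]
    · by_cases h : r = bar m n s ∧ c = bar m n d
      · obtain ⟨h1, h2⟩ := h
        rw [if_pos ⟨h1, h2⟩]
        rw [show single (bar m n s) (bar m n d) (1 : ℂ) r c = 1 by
          rw [h1, h2]; simp]
        rw [show single s d (1 : ℂ) s d = 1 by simp]
        rw [h2, hpb d]
        linear_combination (thv m n d * thv m n s) * sign_simp (p d) (p s)
      · rw [if_neg h]
        have h' : ¬(bar m n s = r ∧ bar m n d = c) := by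
          rintro ⟨h1, h2⟩; exact h ⟨h1.symm, h2.symm⟩
        rw [Matrix.single_apply_of_ne (h := h')]
        ring
    · intro b _ hb
      rw [Matrix.single_apply_of_ne
        (h := (fun hh => hb hh.1 : ¬(b = s ∧ d = d)))]
      ring
    · intro hs; exact absurd (Finset.mem_univ s) hs
  · intro a _ ha
    apply Finset.sum_eq_zero
    intro j _
    rw [Matrix.single_apply_of_ne
      (h := (fun hh => ha hh.2 : ¬(j = s ∧ a = d)))]
    ring
  · intro hd; exact absurd (Finset.mem_univ d) hd

lemma p_bar (m n : ℕ) (θ₀ : ℂ) (hθ : θ₀ = 1 ∨ θ₀ = -1)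
    (p : Fin (m + n) → ZMod 2)
    (hp : ∀ i : Fin (m + n), sgn (p i) = if (i : ℕ) < m then θ₀ else -θ₀)
    (i : Fin (m + n)) : p (bar m n i) = p i := by
  apply sgn_inj
  rw [hp, hp, if_congr (bar_lt_iff m n i) rfl rfl]

lemma sum_sgn (m n : ℕ) (θ₀ : ℂ)
    (p : Fin (m + n) → ZMod 2)
    (hp : ∀ i : Fin (m + n), sgn (p i) = if (i : ℕ) < m then θ₀ else -θ₀) :
    ∑ b : Fin (m + n), sgn (p b) = θ₀ * ((m : ℂ) - (n : ℂ)) := by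
  rw [Finset.sum_congr rfl (fun b _ => hp b), Fin.sum_univ_eq_sum_range
    (fun k => if k < m then θ₀ else -θ₀)]
  rw [Finset.range_eq_Ico,
    ← Finset.sum_Ico_consecutive _ (Nat.zero_le m) (Nat.le_add_right m n),
    ← Finset.range_eq_Ico]
  rw [Finset.sum_congr rfl (fun k hk => if_pos (Finset.mem_range.mp hk)),
    Finset.sum_congr rfl (fun k hk => if_neg
      (by have := (Finset.mem_Ico.mp hk).1; omega))]
  simp [Finset.sum_const, Nat.card_Ico]
  ring

/-- `Q² = θ₀ (m − n) Q` in the `gl(m|n)` setting with `n` even. -/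
theorem Q_sq (m n : ℕ) (hn : Even n) (θ₀ : ℂ) (hθ : θ₀ = 1 ∨ θ₀ = -1)
    (p : Fin (m + n) → ZMod 2)
    (hp : ∀ i : Fin (m + n), sgn (p i) = if (i : ℕ) < m then θ₀ else -θ₀) :
    Qop m n p * Qop m n p = (θ₀ * ((m : ℂ) - (n : ℂ))) • Qop m n p := by
  have hpb := p_bar m n θ₀ hθ p hp
  ext ⟨r, s⟩ ⟨c, d⟩
  rw [Matrix.mul_apply, Matrix.smul_apply, smul_eq_mul]
  rw [Fintype.sum_prod_type]
  simp only [Qop_apply m n p hpb]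
  rw [Finset.sum_comm]
  have key : ∀ b : Fin (m + n),
      (∑ a : Fin (m + n),
        (if r = bar m n s ∧ a = bar m n b then
          sgn (p b) * thv m n s * thv m n b else 0) *
        (if a = bar m n b ∧ c = bar m n d then
          sgn (p d) * thv m n b * thv m n d else 0))
      = sgn (p b) * (if r = bar m n s ∧ c = bar m n d then
          sgn (p d) * thv m n s * thv m n d else 0) := by
    intro b
    rw [Finset.sum_eq_single (bar m n b)]
    · by_cases h1 : r = bar m n s
      · by_cases h2 : c = bar m n d
        · rw [if_pos ⟨h1, rfl⟩, if_pos ⟨rfl, h2⟩, if_pos ⟨h1, h2⟩]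
          linear_combination
            (sgn (p b) * thv m n s * sgn (p d) * thv m n d) * thv_sq m n b
        · simp [h2]
      · simp [h1]
    · intro a _ ha
      rw [if_neg (fun hh => ha hh.1 : ¬(a = bar m n b ∧ c = bar m n d)),
        mul_zero]
    · intro hb; exact absurd (Finset.mem_univ _) hb
  rw [Finset.sum_congr rfl (fun b _ => key b), ← Finset.sum_mul,
    sum_sgn m n θ₀ p hp]

end RefClass2
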